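/- arXiv:1107.0417 — 2 statements merged into one kernel-verified Lean document; each statement's English description precedes it below -/
import Mathlib

section
/- Let (M,ρ) be a separable metric space and Q a Borel probability measure on M. For each k, let X_k, X̃_k be i.i.d. random variables in a measurable space 𝕏_k, independent of G_k ∈ 𝔾_k, and let m_k : 𝕏_k × 𝔾_k → M be measurable. If the pair (m_k(X_k,G_k), m_k(X̃_k,G_k)) converges in distribution to Q ⊗ Q as k → ∞, then for every bounded continuous f : M → ℝ, the conditional expectation E[f(m_k(X_k,G_k)) | G_k] converges in probability to ∫ f dQ. -/
/-!
Write `u_k(γ) = ∫ f(m_k(x, γ)) dP_{X_k}(x)`. Since `X_k` is independent of `G_k`, the conditional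
expectation of `f(m_k(X_k, G_k))` given `G_k` is `u_k(G_k)`. Its mean is `E f(m_k(X_k, G_k))`, and,
as `X_k, X̃_k` are i.i.d. and jointly independent of `G_k`, its second moment is
`E f(m_k(X_k, G_k)) f(m_k(X̃_k, G_k))`. Testing the joint convergence against `f ⊗ 1` and `f ⊗ f`,
these tend to `∫ f dQ` and `(∫ f dQ)²`, so `u_k(G_k) → ∫ f dQ` in `L²`, hence in probability.
-/

open MeasureTheory ProbabilityTheory Filter Topology

section IndependentPair

variable {Ω α β : Type*} {mΩ : MeasurableSpace Ω} {mα : MeasurableSpace α}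
  {mβ : MeasurableSpace β} {P : Measure Ω} [IsFiniteMeasure P] {X X' : Ω → α} {G : Ω → β}

theorem integral_comp_prodMk_eq_integral_integral_map (hX : Measurable X) (hG : Measurable G)
    (hXG : IndepFun X G P) {H : α × β → ℝ} (hH : Integrable H ((P.map X).prod (P.map G))) :
    ∫ ω, H (X ω, G ω) ∂P = ∫ ω, ∫ x, H (x, G ω) ∂(P.map X) ∂P := by
  have hmap := (indepFun_iff_map_prod_eq_prod_map_map hX.aemeasurable hG.aemeasurable).mp hXG
  rw [← integral_map (hX.prodMk hG).aemeasurable (hmap ▸ hH.1), hmap, integral_prod_symm _ hH,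
    integral_map hG.aemeasurable hH.integral_prod_right.1]

theorem condExp_comp_prodMk_ae_eq_integral_map (hX : Measurable X) (hG : Measurable G)
    (hXG : IndepFun X G P) {H : α × β → ℝ} (hH : Integrable H ((P.map X).prod (P.map G))) :
    P[fun ω => H (X ω, G ω) | mβ.comap G] =ᵐ[P] fun ω => ∫ x, H (x, G ω) ∂(P.map X) := by
  have hmap := (indepFun_iff_map_prod_eq_prod_map_map hX.aemeasurable hG.aemeasurable).mp hXG
  have hHint : Integrable (fun ω => H (X ω, G ω)) P :=
    (hmap ▸ hH).comp_measurable (hX.prodMk hG)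
  refine (ae_eq_condExp_of_forall_setIntegral_eq hG.comap_le hHint
    (fun s _ _ => (hH.integral_prod_right.comp_measurable hG).integrableOn) ?_
    (hH.integral_prod_right.1.comp_ae_measurable' hG.aemeasurable)).symm
  rintro _ ⟨t, ht, rfl⟩ -
  have key := integral_comp_prodMk_eq_integral_integral_map hX hG hXG
    (hH.indicator (measurable_snd ht))
  rw [← integral_indicator (hG ht), ← integral_indicator (hG ht)]
  convert key.symm using 3 with ω ω <;> by_cases h : G ω ∈ t <;> simp [h]

theorem integral_mul_comp_eq_integral_sq_integral_map (hX : Measurable X) (hX' : Measurable X')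
    (hG : Measurable G) (hid : P.map X = P.map X') (hXX' : IndepFun X X' P)
    (hXX'G : IndepFun (fun ω => (X ω, X' ω)) G P) {H : α × β → ℝ} (hH : Measurable H) {C : ℝ}
    (hHC : ∀ p, ‖H p‖ ≤ C) :
    ∫ ω, H (X ω, G ω) * H (X' ω, G ω) ∂P = ∫ ω, (∫ x, H (x, G ω) ∂(P.map X)) ^ 2 ∂P := by
  have hpair : P.map (fun ω => (X ω, X' ω)) = (P.map X).prod (P.map X) := by
    rw [(indepFun_iff_map_prod_eq_prod_map_map hX.aemeasurable hX'.aemeasurable).mp hXX', hid]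
  have hprod : Measurable fun q : (α × α) × β => H (q.1.1, q.2) * H (q.1.2, q.2) := by fun_prop
  have hprod_int : Integrable (fun q : (α × α) × β => H (q.1.1, q.2) * H (q.1.2, q.2))
      ((P.map fun ω => (X ω, X' ω)).prod (P.map G)) :=
    .of_bound hprod.aestronglyMeasurable (C * C) <| .of_forall fun q => by
      rw [norm_mul]
      exact mul_le_mul (hHC _) (hHC _) (norm_nonneg _) ((norm_nonneg _).trans (hHC (q.1.1, q.2)))
  rw [integral_comp_prodMk_eq_integral_integral_map (hX.prodMk hX') hG hXX'G hprod_int, hpair]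
  congr 1 with ω
  rw [sq, ← integral_prod_mul]

end IndependentPair

section SecondMoment

variable {Ω ι : Type*} {mΩ : MeasurableSpace Ω} {P : Measure Ω} {l : Filter ι} {u : ι → Ω → ℝ}
  {c : ℝ}

theorem tendstoInMeasure_const_of_tendsto_integral_sq_sub [IsFiniteMeasure P]
    (hu : ∀ k, MemLp (u k) 2 P) (h : Tendsto (fun k => ∫ ω, (u k ω - c) ^ 2 ∂P) l (𝓝 0)) :
    TendstoInMeasure P u l (fun _ => c) := by
  refine tendstoInMeasure_of_tendsto_eLpNorm two_ne_zero (fun k => (hu k).1)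
    aestronglyMeasurable_const ?_
  have hnorm : ∀ k, eLpNorm (u k - fun _ => c) 2 P
      = ENNReal.ofReal ((∫ ω, (u k ω - c) ^ 2 ∂P) ^ (2 : ℝ)⁻¹) := fun k => by
    simp [((hu k).sub (memLp_const c)).eLpNorm_eq_integral_rpow_norm two_ne_zero
      ENNReal.ofNat_ne_top]
  simp_rw [hnorm]
  have hcont : ContinuousAt (fun x : ℝ => ENNReal.ofReal (x ^ (2 : ℝ)⁻¹)) 0 :=
    ENNReal.continuous_ofReal.continuousAt.comp
      (Real.continuousAt_rpow_const _ _ (Or.inr (by norm_num)))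
  have := hcont.tendsto.comp h
  rwa [Function.comp_def, Real.zero_rpow (by norm_num), ENNReal.ofReal_zero] at this

theorem tendstoInMeasure_const_of_tendsto_moments [IsProbabilityMeasure P]
    (hu : ∀ k, MemLp (u k) 2 P) (h₁ : Tendsto (fun k => ∫ ω, u k ω ∂P) l (𝓝 c))
    (h₂ : Tendsto (fun k => ∫ ω, u k ω ^ 2 ∂P) l (𝓝 (c ^ 2))) :
    TendstoInMeasure P u l (fun _ => c) := by
  refine tendstoInMeasure_const_of_tendsto_integral_sq_sub hu ?_
  have hexpand : ∀ k, ∫ ω, (u k ω - c) ^ 2 ∂P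
      = ∫ ω, u k ω ^ 2 ∂P - 2 * c * ∫ ω, u k ω ∂P + c ^ 2 := fun k => by
    have hint := (hu k).integrable one_le_two
    have hdiff : Integrable (fun ω => u k ω ^ 2 - 2 * c * u k ω) P :=
      (hu k).integrable_sq.sub (hint.const_mul _)
    have hpoint : ∀ ω, (u k ω - c) ^ 2 = (u k ω ^ 2 - 2 * c * u k ω) + c ^ 2 := fun ω => by ring
    simp_rw [hpoint]
    rw [integral_add hdiff (integrable_const _),
      integral_sub (hu k).integrable_sq (hint.const_mul _), integral_const_mul]
    simp
  simp_rw [hexpand]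
  convert (h₂.sub (h₁.const_mul (2 * c))).add_const (c ^ 2) using 2
  ring

end SecondMoment

theorem hoeffding_joint_to_conditional_general
    {M : Type*} [MetricSpace M]
    [MeasurableSpace M] [BorelSpace M]
    {Ω : Type*} [MeasurableSpace Ω] {P : Measure Ω} [IsProbabilityMeasure P]
    {𝕏 𝔾 : ℕ → Type*} [∀ k, MeasurableSpace (𝕏 k)] [∀ k, MeasurableSpace (𝔾 k)]
    (X X' : ∀ k, Ω → 𝕏 k) (G : ∀ k, Ω → 𝔾 k)
    (m : ∀ k, 𝕏 k × 𝔾 k → M)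
    (hm : ∀ k, Measurable (m k))
    (hX : ∀ k, Measurable (X k)) (hX' : ∀ k, Measurable (X' k))
    (hG : ∀ k, Measurable (G k))
    (hid : ∀ k, Measure.map (X k) P = Measure.map (X' k) P)
    (hindep : ∀ k, IndepFun (X k) (X' k) P)
    (hindepG : ∀ k, IndepFun (fun ω => (X k ω, X' k ω)) (G k) P)
    (Q : Measure M) [IsProbabilityMeasure Q]
    (hconv : ∀ F : BoundedContinuousFunction (M × M) ℝ,
      Tendsto (fun k => ∫ ω, F (m k (X k ω, G k ω), m k (X' k ω, G k ω)) ∂P) atTop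
        (nhds (∫ z, F z ∂(Q.prod Q)))) :
    ∀ f : BoundedContinuousFunction M ℝ,
      TendstoInMeasure P
        (fun k => P[(fun ω => f (m k (X k ω, G k ω))) |
          MeasurableSpace.comap (G k) inferInstance])
        atTop (fun _ => ∫ x, f x ∂Q) := by
  intro f
  have hfm k : Measurable fun p => f (m k p) := f.continuous.measurable.comp (hm k)
  have hfC k p : ‖f (m k p)‖ ≤ ‖f‖ := f.norm_coe_le_norm _
  have hXG k : IndepFun (X k) (G k) P := (hindepG k).comp measurable_fst measurable_id
  have hint k : Integrable (fun p => f (m k p)) ((P.map (X k)).prod (P.map (G k))) :=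
    .of_bound (hfm k).aestronglyMeasurable _ (.of_forall (hfC k))
  let u k ω := ∫ x, f (m k (x, G k ω)) ∂(P.map (X k))
  have hu k : MemLp (u k) 2 P :=
    .of_bound ((hint k).integral_prod_right.1.comp_measurable (hG k)) _ <| .of_forall fun ω =>
      norm_integral_le_of_norm_le_const (.of_forall fun x => hfC k _)
  have h₁ : Tendsto (fun k => ∫ ω, u k ω ∂P) atTop (𝓝 (∫ x, f x ∂Q)) := by
    have := hconv (f.compContinuous ContinuousMap.fst)
    simp only [BoundedContinuousFunction.compContinuous_apply, ContinuousMap.fst_apply,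
      integral_fun_fst, probReal_univ, one_smul] at this
    exact this.congr fun k =>
      integral_comp_prodMk_eq_integral_integral_map (hX k) (hG k) (hXG k) (hint k)
  have h₂ : Tendsto (fun k => ∫ ω, u k ω ^ 2 ∂P) atTop (𝓝 ((∫ x, f x ∂Q) ^ 2)) := by
    have := hconv (f.compContinuous ContinuousMap.fst * f.compContinuous ContinuousMap.snd)
    simp only [BoundedContinuousFunction.coe_mul, Pi.mul_apply,
      BoundedContinuousFunction.compContinuous_apply, ContinuousMap.fst_apply,
      ContinuousMap.snd_apply, integral_prod_mul, ← sq] at this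
    exact this.congr fun k => integral_mul_comp_eq_integral_sq_integral_map (hX k) (hX' k) (hG k)
      (hid k) (hindep k) (hindepG k) (hfm k) (hfC k)
  exact (tendstoInMeasure_const_of_tendsto_moments hu h₁ h₂).congr_left fun k =>
    (condExp_comp_prodMk_ae_eq_integral_map (hX k) (hG k) (hXG k) (hint k)).symm

/-- **Hoeffding's lemma, direction (D2) ⇒ (D1).**
If the pair `(m_k(X_k,G_k), m_k(X̃_k,G_k))` converges in distribution to `Q ⊗ Q`,
then for every bounded continuous `f`, the conditional expectation
`E[f (m_k(X_k,G_k)) | G_k]` converges in probability to `∫ f dQ`. -/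
theorem hoeffding_joint_to_conditional
    {M : Type*} [MetricSpace M] [TopologicalSpace.SeparableSpace M]
    [MeasurableSpace M] [BorelSpace M]
    {Ω : Type*} [MeasurableSpace Ω] {P : Measure Ω} [IsProbabilityMeasure P]
    {𝕏 𝔾 : ℕ → Type*} [∀ k, MeasurableSpace (𝕏 k)] [∀ k, MeasurableSpace (𝔾 k)]
    (X X' : ∀ k, Ω → 𝕏 k) (G : ∀ k, Ω → 𝔾 k)
    (m : ∀ k, 𝕏 k × 𝔾 k → M)
    (hm : ∀ k, Measurable (m k))
    (hX : ∀ k, Measurable (X k)) (hX' : ∀ k, Measurable (X' k))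
    (hG : ∀ k, Measurable (G k))
    (hid : ∀ k, Measure.map (X k) P = Measure.map (X' k) P)
    (hindep : ∀ k, IndepFun (X k) (X' k) P)
    (hindepG : ∀ k, IndepFun (fun ω => (X k ω, X' k ω)) (G k) P)
    (Q : Measure M) [IsProbabilityMeasure Q]
    (hconv : ∀ F : BoundedContinuousFunction (M × M) ℝ,
      Tendsto (fun k => ∫ ω, F (m k (X k ω, G k ω), m k (X' k ω, G k ω)) ∂P) atTop
        (nhds (∫ z, F z ∂(Q.prod Q)))) :
    ∀ f : BoundedContinuousFunction M ℝ,
      TendstoInMeasure P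
        (fun k => P[(fun ω => f (m k (X k ω, G k ω))) |
          MeasurableSpace.comap (G k) inferInstance])
        atTop (fun _ => ∫ x, f x ∂Q) :=
  hoeffding_joint_to_conditional_general X X' G m hm hX hX' hG hid hindep hindepG Q hconv
end

section
/- For a sequence of probability measures Q̂_k (possibly random) on a separable metric space converging to a fixed probability measure Q, the following are equivalent: (i) for every bounded continuous f, ∫ f dQ̂_k → ∫ f dQ in probability; (ii) D_BL(Q̂_k, Q) → 0 in probability, where D_BL is the bounded-Lipschitz metric using functions f : M → [-1,1] with Lipschitz constant 1. -/
open MeasureTheory ProbabilityTheory Filter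

/-- The bounded-Lipschitz distance `D_BL` between two measures on a metric space:
supremum over `1`-Lipschitz functions with values in `[-1,1]`. -/
noncomputable def DBL {M : Type*} [MetricSpace M] [MeasurableSpace M]
    (μ ν : Measure M) : ℝ :=
  ⨆ f : {f : M → ℝ // LipschitzWith 1 f ∧ ∀ x, f x ∈ Set.Icc (-1 : ℝ) 1},
    |(∫ x, f.1 x ∂μ) - ∫ x, f.1 x ∂ν|

/-!
Convergence in probability of random elements `Y k` to a constant is convergence of a single
filter, made of the sets that `Y k` leaves with vanishing probability. For `Y k = Q̂_k`, viewed in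
the space of probability measures, (i) says that this filter converges weakly to `Q`, and (ii)
says that `D_BL(·, Q)` tends to `0` along it. The two agree because on a separable space `D_BL`
and the Lévy-Prokhorov metric `π`, which metrizes weak convergence, control each other:
`D_BL ≤ 3π` by the layer-cake formula (an `ε`-thickening moves the superlevel sets of a
`1`-Lipschitz function down by at most `ε`), and `π ≤ √D_BL` by testing against `ε` times a
thickened indicator of a set.
-/

open Topology Metric Set
open scoped ENNReal NNReal BoundedContinuousFunction

theorem LipschitzWith.thickening_setOf_le_subset {M : Type*} [PseudoMetricSpace M] {G : M → ℝ}
    (hG : LipschitzWith 1 G) (ε t : ℝ) : thickening ε {x | t ≤ G x} ⊆ {x | t ≤ G x + ε} := by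
  intro x hx
  obtain ⟨y, hy, hxy⟩ := mem_thickening_iff.1 hx
  have hGy := hG.le_add_mul y x
  rw [NNReal.coe_one, one_mul, dist_comm] at hGy
  exact (show t ≤ G y from hy).trans (by linarith)

namespace MeasureTheory

section InProbability

variable {Ω ι X E : Type*} [MeasurableSpace Ω]

def inProbabilityFilter (P : Measure Ω) (l : Filter ι) (Y : ι → Ω → X) : Filter X where
  sets := {U | Tendsto (fun i => P {ω | Y i ω ∉ U}) l (𝓝 0)}
  univ_sets := by simpa using tendsto_const_nhds
  sets_of_superset {U V} hU hUV :=
    tendsto_of_tendsto_of_tendsto_of_le_of_le tendsto_const_nhds hU (fun _ => zero_le)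
      fun _ => measure_mono fun _ hω hωU => hω (hUV hωU)
  inter_sets {U V} hU hV := by
    refine tendsto_of_tendsto_of_tendsto_of_le_of_le tendsto_const_nhds
      (by simpa using hU.add hV) (fun _ => zero_le) fun i => ?_
    refine (measure_mono fun ω hω => ?_).trans (measure_union_le _ _)
    simpa only [mem_ofPred_eq, mem_inter_iff, not_and_or, mem_union] using hω

theorem mem_inProbabilityFilter {P : Measure Ω} {l : Filter ι} {Y : ι → Ω → X} {U : Set X} :
    U ∈ inProbabilityFilter P l Y ↔ Tendsto (fun i => P {ω | Y i ω ∉ U}) l (𝓝 0) :=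
  Iff.rfl

theorem tendstoInMeasure_const_iff_tendsto [PseudoMetricSpace E] {P : Measure Ω} {l : Filter ι}
    {Y : ι → Ω → X} {g : X → E} {c : E} :
    TendstoInMeasure P (fun i ω => g (Y i ω)) l (fun _ => c) ↔
      Tendsto g (inProbabilityFilter P l Y) (𝓝 c) := by
  rw [tendstoInMeasure_iff_dist, nhds_basis_ball.tendsto_right_iff]
  refine forall₂_congr fun ε _ => ?_
  simp only [Filter.Eventually, mem_inProbabilityFilter, mem_ball, mem_ofPred_eq, not_lt]

end InProbability

theorem integrableOn_Ioc_measureReal_setOf_le {α : Type*} [MeasurableSpace α] (μ : Measure α)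
    [IsFiniteMeasure μ] (f : α → ℝ) (a b : ℝ) :
    IntegrableOn (fun t => μ.real {x | t ≤ f x}) (Ioc a b) := by
  have hanti : Antitone fun t => μ.real {x | t ≤ f x} :=
    fun _ _ hst => measureReal_mono fun _ hx => hst.trans hx
  exact (hanti.locallyIntegrable.integrableOn_isCompact isCompact_Icc).mono_set Ioc_subset_Icc_self

section BoundedLipschitz

variable {M : Type*} [MetricSpace M] [MeasurableSpace M]

theorem DBL_le {μ ν : Measure M} {c : ℝ}
    (h : ∀ f : M → ℝ, LipschitzWith 1 f → (∀ x, f x ∈ Icc (-1 : ℝ) 1) →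
      |∫ x, f x ∂μ - ∫ x, f x ∂ν| ≤ c) :
    DBL μ ν ≤ c := by
  have : Nonempty {f : M → ℝ // LipschitzWith 1 f ∧ ∀ x, f x ∈ Icc (-1 : ℝ) 1} :=
    ⟨⟨0, (LipschitzWith.const 0).weaken zero_le, by simp⟩⟩
  exact ciSup_le fun f => h f.1 f.2.1 f.2.2

variable {μ ν : Measure M} [IsProbabilityMeasure μ] [IsProbabilityMeasure ν]

theorem abs_integral_sub_integral_le_DBL {f : M → ℝ} (hf : LipschitzWith 1 f)
    (hf1 : ∀ x, f x ∈ Icc (-1 : ℝ) 1) : |∫ x, f x ∂μ - ∫ x, f x ∂ν| ≤ DBL μ ν := by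
  refine le_ciSup (f := fun g : {g : M → ℝ // LipschitzWith 1 g ∧ ∀ x, g x ∈ Icc (-1 : ℝ) 1} =>
    |∫ x, g.1 x ∂μ - ∫ x, g.1 x ∂ν|) ⟨2, ?_⟩ ⟨f, hf, hf1⟩
  rintro _ ⟨g, rfl⟩
  have hbound (ρ : Measure M) [IsProbabilityMeasure ρ] : |∫ x, g.1 x ∂ρ| ≤ 1 := by
    simpa using norm_integral_le_of_norm_le_const (μ := ρ) (C := 1) (f := g.1)
      (ae_of_all _ fun x => abs_le.2 (g.2.2 x))
  linarith [abs_sub (∫ x, g.1 x ∂μ) (∫ x, g.1 x ∂ν), hbound μ, hbound ν]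

theorem DBL_nonneg : 0 ≤ DBL μ ν :=
  (abs_nonneg _).trans <|
    abs_integral_sub_integral_le_DBL (f := 0) ((LipschitzWith.const 0).weaken zero_le) (by simp)

variable [OpensMeasurableSpace M]

theorem integral_le_integral_add_of_levyProkhorovEDist_lt {ε b : ℝ} (hε : 0 < ε)
    (hμν : levyProkhorovEDist μ ν < ENNReal.ofReal ε) {G : M → ℝ} (hG : LipschitzWith 1 G)
    (hG0 : ∀ x, 0 ≤ G x) (hGb : ∀ x, G x ≤ b) (hb : 0 ≤ b) :
    ∫ x, G x ∂μ ≤ ∫ x, G x ∂ν + (b + 1) * ε := by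
  have hGint (ρ : Measure M) [IsProbabilityMeasure ρ] : Integrable G ρ :=
    .of_bound hG.continuous.aestronglyMeasurable b
      (ae_of_all _ fun x => by rw [Real.norm_of_nonneg (hG0 x)]; exact hGb x)
  have hlevel (t : ℝ) : μ.real {x | t ≤ G x} ≤ ν.real {x | t ≤ G x + ε} + ε := by
    have h := left_measure_le_of_levyProkhorovEDist_lt hμν
      (measurableSet_le measurable_const hG.continuous.measurable : MeasurableSet {x | t ≤ G x})
    rw [ENNReal.toReal_ofReal hε.le] at h
    replace h := h.trans (add_le_add_left (measure_mono (hG.thickening_setOf_le_subset ε t)) _)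
    have := ENNReal.toReal_mono (by finiteness) h
    rwa [ENNReal.toReal_add (measure_ne_top _ _) ENNReal.ofReal_ne_top,
      ENNReal.toReal_ofReal hε.le] at this
  calc ∫ x, G x ∂μ = ∫ t in Ioc 0 b, μ.real {x | t ≤ G x} :=
        (hGint μ).integral_eq_integral_Ioc_meas_le (ae_of_all _ hG0) (ae_of_all _ hGb)
    _ ≤ ∫ t in Ioc 0 b, (ν.real {x | t ≤ G x + ε} + ε) :=
        setIntegral_mono (integrableOn_Ioc_measureReal_setOf_le _ _ _ _)
          ((integrableOn_Ioc_measureReal_setOf_le _ _ _ _).add (integrableOn_const (by simp)))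
          hlevel
    _ = (∫ t in Ioc 0 b, ν.real {x | t ≤ G x + ε}) + b * ε := by
        rw [integral_add (integrableOn_Ioc_measureReal_setOf_le _ _ _ _)
          (integrableOn_const (by simp)), setIntegral_const, Real.volume_real_Ioc_of_le hb,
          sub_zero, smul_eq_mul]
    _ ≤ (∫ t in Ioc 0 (b + ε), ν.real {x | t ≤ G x + ε}) + b * ε := by
        gcongr ?_ + _
        exact setIntegral_mono_set (integrableOn_Ioc_measureReal_setOf_le _ _ _ _)
          (ae_of_all _ fun _ => measureReal_nonneg)
          (Ioc_subset_Ioc_right (by linarith)).eventuallyLE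
    _ = ∫ x, G x ∂ν + (b + 1) * ε := by
        have hGε : Integrable (fun x => G x + ε) ν := (hGint ν).add (integrable_const ε)
        rw [← hGε.integral_eq_integral_Ioc_meas_le
          (ae_of_all _ fun x => by simp only [Pi.zero_apply]; linarith [hG0 x])
          (ae_of_all _ fun x => by linarith [hGb x]),
          integral_add (hGint ν) (integrable_const ε), integral_const]
        simp only [probReal_univ, one_smul]
        ring

theorem integral_sub_integral_le_of_levyProkhorovDist_lt {f : M → ℝ} (hf : LipschitzWith 1 f)
    (hf1 : ∀ x, f x ∈ Icc (-1 : ℝ) 1) {ε : ℝ} (hε : levyProkhorovDist μ ν < ε) :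
    ∫ x, f x ∂μ - ∫ x, f x ∂ν ≤ 3 * ε := by
  have hμν : levyProkhorovEDist μ ν < ENNReal.ofReal ε :=
    (ENNReal.lt_ofReal_iff_toReal_lt (levyProkhorovEDist_ne_top μ ν)).2 hε
  have hf_int (ρ : Measure M) [IsProbabilityMeasure ρ] : Integrable f ρ :=
    .of_bound hf.continuous.aestronglyMeasurable 1 (ae_of_all _ fun x => abs_le.2 (hf1 x))
  have key := integral_le_integral_add_of_levyProkhorovEDist_lt
    (ENNReal.toReal_nonneg.trans_lt hε) hμν (G := fun x => f x + 1)
    (by simpa using hf.add (LipschitzWith.const 1)) (fun x => by linarith [(hf1 x).1])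
    (fun x => by linarith [(hf1 x).2]) zero_le_two
  rw [integral_add (hf_int μ) (integrable_const 1), integral_add (hf_int ν) (integrable_const 1)]
    at key
  simp only [integral_const, probReal_univ, one_smul] at key
  linarith

theorem DBL_le_three_mul_levyProkhorovDist : DBL μ ν ≤ 3 * levyProkhorovDist μ ν := by
  refine DBL_le fun f hf hf1 => abs_sub_le_iff.2 ⟨?_, ?_⟩ <;>
    refine le_of_forall_gt_imp_ge_of_dense fun a ha => ?_
  · simpa [mul_div_cancel₀] using
      integral_sub_integral_le_of_levyProkhorovDist_lt hf hf1 (ε := a / 3) (by linarith)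
  · rw [levyProkhorovDist_comm] at ha
    simpa [mul_div_cancel₀] using
      integral_sub_integral_le_of_levyProkhorovDist_lt (μ := ν) (ν := μ) hf hf1 (ε := a / 3)
        (by linarith)

theorem mul_measureReal_le_mul_measureReal_thickening_add_DBL {ε : ℝ} (hε : 0 < ε) (hε1 : ε ≤ 1)
    {B : Set M} (hB : MeasurableSet B) :
    ε * μ.real B ≤ ε * ν.real (thickening ε B) + DBL μ ν := by
  set T := thickenedIndicator hε B
  set u : M → ℝ := fun x => ε * T x
  have hu : LipschitzWith 1 u := LipschitzWith.of_dist_le_mul fun x y => by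
    have hT := (lipschitzWith_thickenedIndicator hε B).dist_le_mul x y
    rw [NNReal.dist_eq, NNReal.coe_inv, Real.coe_toNNReal _ hε.le] at hT
    calc dist (u x) (u y) = ε * |(T x : ℝ) - T y| := by
          rw [Real.dist_eq, ← mul_sub, abs_mul, abs_of_pos hε]
      _ ≤ ε * (ε⁻¹ * dist x y) := by gcongr
      _ = 1 * dist x y := by field_simp
  have hu1 (x : M) : u x ∈ Icc (-1 : ℝ) 1 := by
    have hT0 : 0 ≤ (T x : ℝ) := (T x).coe_nonneg
    have hT1 : (T x : ℝ) ≤ 1 := by exact_mod_cast thickenedIndicator_le_one hε B x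
    exact ⟨by nlinarith, by nlinarith⟩
  have hu_int (ρ : Measure M) [IsProbabilityMeasure ρ] : Integrable u ρ :=
    .of_bound hu.continuous.aestronglyMeasurable 1 (ae_of_all _ fun x => abs_le.2 (hu1 x))
  have hlow : ε * μ.real B ≤ ∫ x, u x ∂μ := by
    rw [mul_comm, ← smul_eq_mul, ← integral_indicator_const ε hB]
    refine integral_mono ((integrable_const ε).indicator hB) (hu_int μ) fun x => ?_
    by_cases hx : x ∈ B
    · simp only [indicator_of_mem hx, u, T, thickenedIndicator_one hε B hx, NNReal.coe_one,
        mul_one, le_refl]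
    · simp only [indicator_of_notMem hx]
      positivity
  have hup : ∫ x, u x ∂ν ≤ ε * ν.real (thickening ε B) := by
    rw [mul_comm, ← smul_eq_mul, ← integral_indicator_const ε isOpen_thickening.measurableSet]
    refine integral_mono (hu_int ν)
      ((integrable_const ε).indicator isOpen_thickening.measurableSet) fun x => ?_
    by_cases hx : x ∈ thickening ε B
    · have hT1 : (T x : ℝ) ≤ 1 := by exact_mod_cast thickenedIndicator_le_one hε B x
      simp only [indicator_of_mem hx, u]
      nlinarith
    · simp only [indicator_of_notMem hx, u, T, thickenedIndicator_zero hε B hx, NNReal.coe_zero,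
        mul_zero, le_refl]
  linarith [(le_abs_self _).trans (abs_integral_sub_integral_le_DBL hu hu1 (μ := μ) (ν := ν))]

theorem levyProkhorovDist_le_sqrt_DBL : levyProkhorovDist μ ν ≤ √(DBL μ ν) := by
  refine levyProkhorovDist_le_of_forall_le μ ν (Real.sqrt_nonneg _) fun ε B hε hB => ?_
  have hε0 : 0 < ε := (Real.sqrt_nonneg _).trans_lt hε
  rcases le_or_gt ε 1 with hε1 | hε1
  · have hD : DBL μ ν < ε * ε := by simpa [sq] using (Real.sqrt_lt' hε0).1 hε
    have h := mul_measureReal_le_mul_measureReal_thickening_add_DBL (μ := μ) (ν := ν) hε0 hε1 hB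
    have hreal : μ.real B ≤ ν.real (thickening ε B) + ε :=
      le_of_mul_le_mul_left (by linarith) hε0
    rw [← ENNReal.ofReal_toReal (measure_ne_top μ B),
      ← ENNReal.ofReal_toReal (measure_ne_top ν (thickening ε B)),
      ← ENNReal.ofReal_add ENNReal.toReal_nonneg hε0.le]
    exact ENNReal.ofReal_le_ofReal hreal
  · calc μ B ≤ 1 := prob_le_one
      _ ≤ ENNReal.ofReal ε := ENNReal.one_le_ofReal.2 hε1.le
      _ ≤ _ := le_add_self

end BoundedLipschitz

theorem ProbabilityMeasure.tendsto_iff_tendsto_DBL {M : Type*} [MetricSpace M]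
    [TopologicalSpace.SeparableSpace M] [MeasurableSpace M] [OpensMeasurableSpace M]
    {γ : Type*} {F : Filter γ} {μs : γ → ProbabilityMeasure M} {Q : ProbabilityMeasure M} :
    Tendsto μs F (𝓝 Q) ↔ Tendsto (fun i => DBL (μs i : Measure M) Q) F (𝓝 0) := by
  rw [LevyProkhorov.probabilityMeasureHomeomorph.isInducing.tendsto_nhds_iff,
    tendsto_iff_dist_tendsto_zero]
  change Tendsto (fun i => levyProkhorovDist (μs i : Measure M) Q) F (𝓝 0) ↔ _
  constructor
  · intro h
    exact squeeze_zero (fun _ => DBL_nonneg) (fun _ => DBL_le_three_mul_levyProkhorovDist)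
      (by simpa using h.const_mul 3)
  · intro h
    exact squeeze_zero (fun _ => ENNReal.toReal_nonneg) (fun _ => levyProkhorovDist_le_sqrt_DBL)
      (by simpa using h.sqrt)

end MeasureTheory

theorem weak_convergence_in_probability_iff_DBL_general
    {M : Type*} [MetricSpace M] [TopologicalSpace.SeparableSpace M]
    [MeasurableSpace M] [BorelSpace M]
    {Ω : Type*} [MeasurableSpace Ω] {P : Measure Ω} [IsProbabilityMeasure P]
    (Qhat : ℕ → Ω → Measure M)
    (hprob : ∀ k ω, IsProbabilityMeasure (Qhat k ω))
    (Q : Measure M) [IsProbabilityMeasure Q] :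
    (∀ f : BoundedContinuousFunction M ℝ,
        TendstoInMeasure P (fun k ω => ∫ x, f x ∂(Qhat k ω)) atTop
          (fun _ => ∫ x, f x ∂Q))
      ↔ TendstoInMeasure P (fun k ω => DBL (Qhat k ω) Q) atTop (fun _ => (0 : ℝ)) := by
  let Y : ℕ → Ω → ProbabilityMeasure M := fun k ω => ⟨Qhat k ω, hprob k ω⟩
  let Qp : ProbabilityMeasure M := ⟨Q, inferInstance⟩
  have hint (f : M →ᵇ ℝ) := tendstoInMeasure_const_iff_tendsto (P := P) (l := atTop) (Y := Y)
    (g := fun μ : ProbabilityMeasure M => ∫ x, f x ∂μ) (c := ∫ x, f x ∂Qp)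
  have hDBL := tendstoInMeasure_const_iff_tendsto (P := P) (l := atTop) (Y := Y)
    (g := fun μ : ProbabilityMeasure M => DBL μ Q) (c := 0)
  exact (forall_congr' hint).trans <|
    ProbabilityMeasure.tendsto_iff_forall_integral_tendsto.symm.trans <|
      ProbabilityMeasure.tendsto_iff_tendsto_DBL.trans hDBL.symm

/-- For a sequence of random probability measures `Q̂_k` on a separable metric space and a
fixed probability measure `Q`, the following are equivalent:
(i) `∫ f dQ̂_k → ∫ f dQ` in probability for every bounded continuous `f`;
(ii) `D_BL(Q̂_k, Q) → 0` in probability. -/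
theorem weak_convergence_in_probability_iff_DBL
    {M : Type*} [MetricSpace M] [TopologicalSpace.SeparableSpace M]
    [MeasurableSpace M] [BorelSpace M]
    {Ω : Type*} [MeasurableSpace Ω] {P : Measure Ω} [IsProbabilityMeasure P]
    (Qhat : ℕ → Ω → Measure M)
    (hmeas : ∀ k, Measurable (Qhat k))
    (hprob : ∀ k ω, IsProbabilityMeasure (Qhat k ω))
    (Q : Measure M) [IsProbabilityMeasure Q] :
    (∀ f : BoundedContinuousFunction M ℝ,
        TendstoInMeasure P (fun k ω => ∫ x, f x ∂(Qhat k ω)) atTop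
          (fun _ => ∫ x, f x ∂Q))
      ↔ TendstoInMeasure P (fun k ω => DBL (Qhat k ω) Q) atTop (fun _ => (0 : ℝ)) :=
  weak_convergence_in_probability_iff_DBL_general Qhat hprob Q
end
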